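/- For n ≥ 1 and 1 ≤ k ≤ n, the diameter of the coset space U(k)/U(k-1), with respect to the factor metric induced by the normalized trace metric on U(n) (embedding U(k) into U(n) as u ↦ u ⊕ 1_{n-k}), is at most 4/n. -/

import Mathlib

/-!
For `g₁, g₂ ∈ U(k)`, a product `R` of two Householder reflections in unit vectors `u₁, u₂ ∈ ℂᵏ`
carries the last column of `g₁` to that of `g₂`. Then `g₂⁻¹ R g₁` fixes `e_k`, so it is
`h ⊕ 1` for some `h ∈ U(k-1)`, and `g₁ - g₂ (h ⊕ 1) = (1 - R) g₁`. By unitary invariance its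
trace norm is that of the difference of the two reflections, `2 (P_{u₂} - P_{u₁})`, where `P_u`
is the projection onto `ℂ u`. The Hermitian `X = P_{u₂} - P_{u₁}` satisfies `X⁴ = t² X²` with
`t² = 1 - |⟪u₁, u₂⟫|²`, so `|X| = X² / t` and `tr |X| = 2 t ≤ 2`. The reflections exist because
two unit vectors `v₁, v₂` in a space of dimension `≥ 2` have a common unit vector `t` with real
inner products `< 1`, and the reflection in `v - t` swaps `v` and `t`. For `k = 1` the group
`U(0)` is trivial and `pad g₁ - pad g₂` is diagonal with a single entry of modulus `≤ 2`.
-/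

open Matrix
open scoped ComplexOrder

/-- The absolute value `|x| = (x*x)^{1/2}` of a complex matrix. -/
noncomputable def mAbs {n : ℕ} (x : Matrix (Fin n) (Fin n) ℂ) : Matrix (Fin n) (Fin n) ℂ :=
  (Matrix.posSemidef_conjTranspose_mul_self x).1.eigenvectorUnitary.1 *
    diagonal ((↑) ∘ (√·) ∘ (Matrix.posSemidef_conjTranspose_mul_self x).1.eigenvalues) *
    (star (Matrix.posSemidef_conjTranspose_mul_self x).1.eigenvectorUnitary : Matrix (Fin n) (Fin n) ℂ)

/-- The normalized trace norm `‖x‖₁ = (1/n)·tr(|x|)`. -/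
noncomputable def trNorm {n : ℕ} (x : Matrix (Fin n) (Fin n) ℂ) : ℝ :=
  (1 / (n : ℝ)) * (mAbs x).trace.re

/-- The operator norm of a matrix acting on `ℂⁿ`. -/
noncomputable def opNorm {n : ℕ} (x : Matrix (Fin n) (Fin n) ℂ) : ℝ :=
  ‖Matrix.toEuclideanCLM (𝕜 := ℂ) x‖

/-- The block-diagonal padding `u ⊕ 1_{n-k}` of a `k×k` matrix to an `n×n` matrix. -/
def pad {k n : ℕ} (_h : k ≤ n) (u : Matrix (Fin k) (Fin k) ℂ) : Matrix (Fin n) (Fin n) ℂ :=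
  fun i j =>
    if hi : (i : ℕ) < k then (if hj : (j : ℕ) < k then u ⟨i, hi⟩ ⟨j, hj⟩ else 0)
    else (if (i : ℕ) = (j : ℕ) then 1 else 0)

section TraceNorm

variable {n : ℕ}

open scoped MatrixOrder

lemma mAbs_eq_sqrt (x : Matrix (Fin n) (Fin n) ℂ) : mAbs x = CFC.sqrt (xᴴ * x) := by
  rw [CFC.sqrt_eq_cfc, cfc_nnreal_eq_real _ (xᴴ * x) (posSemidef_conjTranspose_mul_self x).nonneg,
    (posSemidef_conjTranspose_mul_self x).1.cfc_eq, IsHermitian.cfc,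
    Unitary.conjStarAlgAut_apply, mAbs]
  congr 3
  funext i
  simp only [Function.comp_apply, Real.coe_sqrt,
    Real.coe_toNNReal _ ((posSemidef_conjTranspose_mul_self x).eigenvalues_nonneg i)]
  rfl

lemma posSemidef_mAbs (x : Matrix (Fin n) (Fin n) ℂ) : (mAbs x).PosSemidef := by
  rw [mAbs_eq_sqrt]
  exact (CFC.sqrt_nonneg _).posSemidef

lemma mAbs_mul_self (x : Matrix (Fin n) (Fin n) ℂ) : mAbs x * mAbs x = xᴴ * x := by
  rw [mAbs_eq_sqrt]
  exact CFC.sqrt_mul_sqrt_self _ (posSemidef_conjTranspose_mul_self x).nonneg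

lemma mAbs_eq_of_mul_self_eq {x M : Matrix (Fin n) (Fin n) ℂ} (hM : M.PosSemidef)
    (h : M * M = xᴴ * x) : mAbs x = M := by
  rw [mAbs_eq_sqrt]
  exact CFC.sqrt_unique h hM.nonneg

lemma mAbs_ofReal_smul {r : ℝ} (hr : 0 ≤ r) (x : Matrix (Fin n) (Fin n) ℂ) :
    mAbs ((r : ℂ) • x) = (r : ℂ) • mAbs x := by
  refine mAbs_eq_of_mul_self_eq ((posSemidef_mAbs x).smul (Complex.zero_le_real.mpr hr)) ?_
  rw [conjTranspose_smul, smul_mul_smul_comm, smul_mul_smul_comm, mAbs_mul_self,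
    Complex.star_def, Complex.conj_ofReal]

lemma mAbs_diagonal (d : Fin n → ℂ) :
    mAbs (diagonal d) = diagonal fun i => ((‖d i‖ : ℝ) : ℂ) := by
  refine mAbs_eq_of_mul_self_eq
    (PosSemidef.diagonal fun i => Complex.zero_le_real.mpr (norm_nonneg _)) ?_
  rw [diagonal_mul_diagonal, diagonal_conjTranspose, diagonal_mul_diagonal]
  congr 1
  funext i
  rw [Pi.star_apply, Complex.star_def, Complex.conj_mul', sq]

-- For `t = 0` both sides vanish, the right one through `0⁻¹ = 0`.
lemma mAbs_eq_inv_smul_mul_self {X : Matrix (Fin n) (Fin n) ℂ} (hX : X.IsHermitian) {t : ℝ}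
    (ht : 0 ≤ t) (h : X * X * (X * X) = ((t ^ 2 : ℝ) : ℂ) • (X * X)) :
    mAbs X = ((t⁻¹ : ℝ) : ℂ) • (X * X) := by
  have hXX : (X * X).PosSemidef := by
    simpa only [hX.eq] using posSemidef_conjTranspose_mul_self X
  refine mAbs_eq_of_mul_self_eq (hXX.smul (Complex.zero_le_real.mpr (inv_nonneg.mpr ht))) ?_
  rw [hX.eq, smul_mul_smul_comm, h, smul_smul, ← Complex.ofReal_mul, ← Complex.ofReal_mul]
  rcases ht.eq_or_lt with rfl | ht
  · have : (X * X)ᴴ * (X * X) = 0 := by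
      rw [hXX.isHermitian.eq, h]; simp
    simp [conjTranspose_mul_self_eq_zero.mp this]
  · rw [show t⁻¹ * t⁻¹ * t ^ 2 = 1 by field_simp, Complex.ofReal_one, one_smul]

lemma trNorm_nonneg (x : Matrix (Fin n) (Fin n) ℂ) : 0 ≤ trNorm x :=
  mul_nonneg (by positivity) (Complex.nonneg_iff.mp (posSemidef_mAbs x).trace_nonneg).1

lemma trNorm_le_div {x : Matrix (Fin n) (Fin n) ℂ} {c : ℝ} (h : (mAbs x).trace.re ≤ c) :
    trNorm x ≤ c / n := by
  rw [trNorm, one_div_mul_eq_div]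
  exact div_le_div_of_nonneg_right h n.cast_nonneg

lemma trNorm_unitary_mul {u : Matrix (Fin n) (Fin n) ℂ} (hu : u ∈ unitaryGroup (Fin n) ℂ)
    (x : Matrix (Fin n) (Fin n) ℂ) : trNorm (u * x) = trNorm x := by
  have : mAbs (u * x) = mAbs x := by
    refine mAbs_eq_of_mul_self_eq (posSemidef_mAbs x) ?_
    rw [mAbs_mul_self, conjTranspose_mul, Matrix.mul_assoc, ← Matrix.mul_assoc uᴴ,
      show uᴴ * u = 1 from mem_unitaryGroup_iff'.mp hu, Matrix.one_mul]
  rw [trNorm, this, trNorm]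

lemma trNorm_mul_unitary {u : Matrix (Fin n) (Fin n) ℂ} (hu : u ∈ unitaryGroup (Fin n) ℂ)
    (x : Matrix (Fin n) (Fin n) ℂ) : trNorm (x * u) = trNorm x := by
  have hu' : u * uᴴ = 1 := mem_unitaryGroup_iff.mp hu
  have : mAbs (x * u) = uᴴ * mAbs x * u := by
    refine mAbs_eq_of_mul_self_eq ((posSemidef_mAbs x).conjTranspose_mul_mul_same u) ?_
    calc uᴴ * mAbs x * u * (uᴴ * mAbs x * u) = uᴴ * (mAbs x * (u * uᴴ) * mAbs x) * u := by
          simp only [Matrix.mul_assoc]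
      _ = (x * u)ᴴ * (x * u) := by
          rw [hu', Matrix.mul_one, mAbs_mul_self, conjTranspose_mul]
          simp only [Matrix.mul_assoc]
  rw [trNorm, this, trNorm, Matrix.mul_assoc, trace_mul_comm, Matrix.mul_assoc, hu',
    Matrix.mul_one]

end TraceNorm

section Reflections

variable {ι : Type*} [Fintype ι]

lemma star_sub_smul_dotProduct_sub_smul {u : ι → ℂ} (hu : star u ⬝ᵥ u = 1) (v : ι → ℂ) :
    star (v - (star u ⬝ᵥ v) • u) ⬝ᵥ (v - (star u ⬝ᵥ v) • u)
      = star v ⬝ᵥ v - Complex.normSq (star u ⬝ᵥ v) := by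
  have hvu : star v ⬝ᵥ u = star (star u ⬝ᵥ v) := by rw [star_dotProduct]
  rw [star_sub, star_smul, sub_dotProduct, dotProduct_sub, dotProduct_sub, smul_dotProduct,
    smul_dotProduct, dotProduct_smul, dotProduct_smul, hu, hvu, Complex.normSq_eq_conj_mul_self]
  simp only [smul_eq_mul, Complex.star_def]
  ring

lemma normSq_dotProduct_le_one {u v : ι → ℂ} (hu : star u ⬝ᵥ u = 1) (hv : star v ⬝ᵥ v = 1) :
    Complex.normSq (star u ⬝ᵥ v) ≤ 1 := by
  have h := dotProduct_star_self_nonneg (v - (star u ⬝ᵥ v) • u)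
  rw [star_sub_smul_dotProduct_sub_smul hu, hv, ← Complex.ofReal_one, ← Complex.ofReal_sub,
    Complex.zero_le_real] at h
  linarith

lemma eq_smul_of_normSq_dotProduct_eq_one {u v : ι → ℂ} (hu : star u ⬝ᵥ u = 1)
    (hv : star v ⬝ᵥ v = 1) (h : Complex.normSq (star u ⬝ᵥ v) = 1) :
    v = (star u ⬝ᵥ v) • u := by
  have h0 := star_sub_smul_dotProduct_sub_smul hu v
  rw [hv, h, Complex.ofReal_one, sub_self] at h0
  exact sub_eq_zero.mp (dotProduct_star_self_eq_zero.mp h0)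

lemma star_smul_dotProduct_smul_inv_sqrt {x : ι → ℂ} {r : ℝ} (hr : 0 < r)
    (hx : star x ⬝ᵥ x = r) :
    star (((√r)⁻¹ : ℝ) • x) ⬝ᵥ (((√r)⁻¹ : ℝ) • x) = 1 := by
  rw [star_smul, smul_dotProduct, dotProduct_smul, hx, star_trivial, smul_smul, ← mul_inv,
    Real.mul_self_sqrt hr.le, Complex.real_smul, ← Complex.ofReal_mul, inv_mul_cancel₀ hr.ne',
    Complex.ofReal_one]

def proj (u : ι → ℂ) : Matrix ι ι ℂ := vecMulVec u (star u)

def householder [DecidableEq ι] (u : ι → ℂ) : Matrix ι ι ℂ := 1 - (2 : ℂ) • proj u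

omit [Fintype ι] in
lemma proj_isHermitian (u : ι → ℂ) : (proj u).IsHermitian := by
  simp [IsHermitian, proj]

lemma proj_mul_proj (u v : ι → ℂ) :
    proj u * proj v = (star u ⬝ᵥ v) • vecMulVec u (star v) := by
  rw [proj, proj, vecMulVec_mul_vecMulVec, vecMulVec_smul]

lemma exists_unit_dotProduct_eq_real_lt_one {v₁ v₂ : ι → ℂ} (hv₁ : star v₁ ⬝ᵥ v₁ = 1)
    (hv₂ : star v₂ ⬝ᵥ v₂ = 1) (hs : Complex.normSq (star v₁ ⬝ᵥ v₂) < 1) :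
    ∃ t : ι → ℂ, star t ⬝ᵥ t = 1 ∧
      Function.support t ⊆ Function.support v₁ ∪ Function.support v₂ ∧
      ∃ τ : ℝ, τ < 1 ∧ star t ⬝ᵥ v₁ = τ ∧ star t ⬝ᵥ v₂ = τ := by
  set s := star v₁ ⬝ᵥ v₂
  set σ := Complex.normSq s
  have hs21 : star v₂ ⬝ᵥ v₁ = star s := by rw [star_dotProduct]
  have hσ : ((1 - σ : ℝ) : ℂ) = 1 - star s * s := by
    rw [Complex.star_def, ← Complex.normSq_eq_conj_mul_self]; push_cast; ring
  set t := (1 - s) • v₁ + (1 - star s) • v₂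
  have ht₁ : star t ⬝ᵥ v₁ = ((1 - σ : ℝ) : ℂ) := by
    simp only [t, star_add, star_smul, add_dotProduct, smul_dotProduct, hv₁, hs21, hσ,
      star_sub, star_one, star_star, smul_eq_mul]
    ring
  have ht₂ : star t ⬝ᵥ v₂ = ((1 - σ : ℝ) : ℂ) := by
    simp only [t, star_add, star_smul, add_dotProduct, smul_dotProduct, hv₂, hσ,
      star_sub, star_one, star_star, smul_eq_mul]
    ring
  have hnorm : star t ⬝ᵥ t = (((1 - σ) * (2 - 2 * s.re) : ℝ) : ℂ) := by
    have hre : (1 - s) + (1 - star s) = ((2 - 2 * s.re : ℝ) : ℂ) := by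
      rw [Complex.star_def, show (1 - s) + (1 - (starRingEnd ℂ) s) = 2 - (s + (starRingEnd ℂ) s)
        by ring, Complex.add_conj]
      push_cast; ring
    conv_lhs => enter [2]; rw [show t = (1 - s) • v₁ + (1 - star s) • v₂ from rfl]
    rw [dotProduct_add, dotProduct_smul, dotProduct_smul, ht₁, ht₂, smul_eq_mul, smul_eq_mul,
      ← add_mul, hre, ← Complex.ofReal_mul, mul_comm]
  -- `1 - σ < 2 - 2 Re s` says `|1 - s|² > 0`
  have hlt : 1 - σ < 2 - 2 * s.re := by
    have hs1 : 1 - s ≠ 0 := fun h => by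
      have : σ = 1 := by simp [σ, ← sub_eq_zero.mp h]
      linarith
    have := Complex.normSq_pos.mpr hs1
    rw [Complex.normSq_sub, Complex.normSq_one, one_mul, Complex.conj_re] at this
    linarith
  have hσ1 : 0 < 1 - σ := by linarith
  have hpos : 0 < (1 - σ) * (2 - 2 * s.re) := mul_pos hσ1 (by linarith)
  refine ⟨_, star_smul_dotProduct_smul_inv_sqrt hpos hnorm,
    (Function.support_const_smul_subset _ _).trans ((Function.support_add _ _).trans
      (Set.union_subset_union (Function.support_const_smul_subset _ _)
        (Function.support_const_smul_subset _ _))),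
    (√((1 - σ) * (2 - 2 * s.re)))⁻¹ * (1 - σ), ?_, ?_, ?_⟩
  · rw [inv_mul_lt_iff₀ (Real.sqrt_pos.mpr hpos), mul_one, Real.lt_sqrt hσ1.le]
    nlinarith
  · rw [star_smul, smul_dotProduct, ht₁, star_trivial, Complex.real_smul, Complex.ofReal_mul]
  · rw [star_smul, smul_dotProduct, ht₂, star_trivial, Complex.real_smul, Complex.ofReal_mul]

variable [DecidableEq ι]

lemma householder_isHermitian (u : ι → ℂ) : (householder u).IsHermitian := by
  simpa [householder, IsHermitian, conjTranspose_sub, conjTranspose_smul]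
    using (proj_isHermitian u).eq

lemma householder_mulVec (u v : ι → ℂ) :
    householder u *ᵥ v = v - (2 * (star u ⬝ᵥ v)) • u := by
  rw [householder, sub_mulVec, one_mulVec, smul_mulVec, proj, vecMulVec_mulVec, op_smul_eq_smul,
    smul_smul]

lemma householder_mulVec_of_dotProduct_eq_zero {u v : ι → ℂ} (h : star u ⬝ᵥ v = 0) :
    householder u *ᵥ v = v := by
  rw [householder_mulVec, h, mul_zero, zero_smul, sub_zero]

lemma householder_mulVec_single_of_apply_eq_zero {u : ι → ℂ} {j : ι} (h : u j = 0) :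
    householder u *ᵥ Pi.single j 1 = Pi.single j 1 :=
  householder_mulVec_of_dotProduct_eq_zero <| by
    rw [dotProduct_single, mul_one, Pi.star_apply, h, star_zero]

lemma householder_mul_self {u : ι → ℂ} (hu : star u ⬝ᵥ u = 1) :
    householder u * householder u = 1 := by
  simp only [householder, Matrix.mul_sub, Matrix.sub_mul, Matrix.mul_one, Matrix.one_mul,
    smul_mul_smul_comm, proj_mul_proj, hu, one_smul]
  rw [← proj]
  module

lemma householder_mem_unitaryGroup {u : ι → ℂ} (hu : star u ⬝ᵥ u = 1) :
    householder u ∈ unitaryGroup ι ℂ := by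
  rw [mem_unitaryGroup_iff, star_eq_conjTranspose, (householder_isHermitian u).eq,
    householder_mul_self hu]

omit [Fintype ι] in
lemma householder_sub_householder (u v : ι → ℂ) :
    householder u - householder v = ((2 : ℝ) : ℂ) • (proj v - proj u) := by
  rw [householder, householder]
  push_cast
  module

lemma exists_householder_mulVec_eq {v t : ι → ℂ} (hv : star v ⬝ᵥ v = 1)
    (ht : star t ⬝ᵥ t = 1) {τ : ℝ} (hτ : star t ⬝ᵥ v = τ) (hτ1 : τ < 1) :
    ∃ u, star u ⬝ᵥ u = 1 ∧ Function.support u ⊆ Function.support v ∪ Function.support t ∧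
      householder u *ᵥ v = t := by
  have hvt : star v ⬝ᵥ t = τ := by
    rw [star_dotProduct, hτ, Complex.star_def, Complex.conj_ofReal]
  have hnorm : star (v - t) ⬝ᵥ (v - t) = ((2 - 2 * τ : ℝ) : ℂ) := by
    rw [star_sub, sub_dotProduct, dotProduct_sub, dotProduct_sub, hv, ht, hτ, hvt]
    push_cast; ring
  have hpos : 0 < 2 - 2 * τ := by linarith
  refine ⟨((√(2 - 2 * τ))⁻¹ : ℝ) • (v - t), star_smul_dotProduct_smul_inv_sqrt hpos hnorm,
    (Function.support_const_smul_subset _ _).trans (Function.support_sub _ _), ?_⟩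
  have ha : 2 * ((√(2 - 2 * τ))⁻¹ * (1 - τ)) * (√(2 - 2 * τ))⁻¹ = 1 := by
    have hs := Real.sq_sqrt hpos.le
    have hs0 : √(2 - 2 * τ) ≠ 0 := (Real.sqrt_pos.mpr hpos).ne'
    generalize √(2 - 2 * τ) = s at hs hs0 ⊢
    field_simp
    linarith
  rw [householder_mulVec, star_smul, star_trivial, smul_dotProduct, star_sub, sub_dotProduct, hv,
    hτ, ← Complex.ofReal_one, ← Complex.ofReal_sub, Complex.real_smul, ← Complex.ofReal_mul,
    ← Complex.ofReal_ofNat, ← Complex.ofReal_mul, Complex.coe_smul, smul_smul, ha, one_smul,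
    sub_sub_cancel]

lemma exists_unit_dotProduct_eq_zero {S : Set ι} (hS : S.Nontrivial) {v : ι → ℂ}
    (hv : star v ⬝ᵥ v = 1) (hvS : Function.support v ⊆ S) :
    ∃ t : ι → ℂ, star t ⬝ᵥ t = 1 ∧ Function.support t ⊆ S ∧ star t ⬝ᵥ v = 0 := by
  obtain ⟨i₀, hi₀⟩ : ∃ i, v i ≠ 0 := by
    by_contra! h
    simp [funext h] at hv
  obtain ⟨i₁, hi₁S, hi₁⟩ := hS.exists_ne i₀
  set t : ι → ℂ := Pi.single i₀ (star (v i₁)) - Pi.single i₁ (star (v i₀))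
  have hstar : star t = (Pi.single i₀ (v i₁) - Pi.single i₁ (v i₀) : ι → ℂ) := by
    simp [t, star_sub]
  have horth : star t ⬝ᵥ v = 0 := by
    rw [hstar, sub_dotProduct, single_dotProduct, single_dotProduct, mul_comm, sub_self]
  have hnorm : star t ⬝ᵥ t = ((Complex.normSq (v i₀) + Complex.normSq (v i₁) : ℝ) : ℂ) := by
    rw [hstar, sub_dotProduct, single_dotProduct, single_dotProduct]
    simp only [t, Pi.sub_apply, Pi.single_eq_same, Pi.single_eq_of_ne hi₁,
      Pi.single_eq_of_ne hi₁.symm]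
    push_cast
    rw [Complex.normSq_eq_conj_mul_self, Complex.normSq_eq_conj_mul_self]
    simp only [Complex.star_def]
    ring
  have hpos : 0 < Complex.normSq (v i₀) + Complex.normSq (v i₁) :=
    add_pos_of_pos_of_nonneg (Complex.normSq_pos.mpr hi₀) (Complex.normSq_nonneg _)
  refine ⟨_, star_smul_dotProduct_smul_inv_sqrt hpos hnorm, ?_, ?_⟩
  · refine (Function.support_const_smul_subset _ _).trans
      ((Function.support_sub _ _).trans (Set.union_subset ?_ ?_))
    · exact (Pi.support_single_subset).trans (Set.singleton_subset_iff.mpr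
        (hvS (Function.mem_support.mpr hi₀)))
    · exact (Pi.support_single_subset).trans (Set.singleton_subset_iff.mpr hi₁S)
  · rw [star_smul, smul_dotProduct, horth, smul_zero]

lemma exists_householder_mulVec_householder_mulVec_eq {S : Set ι} (hS : S.Nontrivial)
    {v₁ v₂ : ι → ℂ} (hv₁ : star v₁ ⬝ᵥ v₁ = 1) (hv₂ : star v₂ ⬝ᵥ v₂ = 1)
    (hv₁S : Function.support v₁ ⊆ S) (hv₂S : Function.support v₂ ⊆ S) :
    ∃ u₁ u₂ : ι → ℂ, star u₁ ⬝ᵥ u₁ = 1 ∧ star u₂ ⬝ᵥ u₂ = 1 ∧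
      Function.support u₁ ⊆ S ∧ Function.support u₂ ⊆ S ∧
      householder u₂ *ᵥ (householder u₁ *ᵥ v₁) = v₂ := by
  obtain ⟨t, ht, htS, τ₁, τ₂, hτ₁, hτ₂, h₁, h₂⟩ : ∃ t : ι → ℂ, star t ⬝ᵥ t = 1 ∧
      Function.support t ⊆ S ∧ ∃ τ₁ τ₂ : ℝ, τ₁ < 1 ∧ τ₂ < 1 ∧
        star t ⬝ᵥ v₁ = τ₁ ∧ star t ⬝ᵥ v₂ = τ₂ := by
    rcases (normSq_dotProduct_le_one hv₁ hv₂).lt_or_eq with hs | hs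
    · obtain ⟨t, ht, htS, τ, hτ, h₁, h₂⟩ := exists_unit_dotProduct_eq_real_lt_one hv₁ hv₂ hs
      exact ⟨t, ht, htS.trans (Set.union_subset hv₁S hv₂S), τ, τ, hτ, hτ, h₁, h₂⟩
    · obtain ⟨t, ht, htS, h₁⟩ := exists_unit_dotProduct_eq_zero hS hv₁ hv₁S
      refine ⟨t, ht, htS, 0, 0, one_pos, one_pos, by simpa using h₁, ?_⟩
      rw [eq_smul_of_normSq_dotProduct_eq_one hv₁ hv₂ hs, dotProduct_smul, h₁, smul_zero,
        Complex.ofReal_zero]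
  obtain ⟨u₁, hu₁, hu₁S, hu₁v⟩ := exists_householder_mulVec_eq hv₁ ht h₁ hτ₁
  obtain ⟨u₂, hu₂, hu₂S, hu₂v⟩ := exists_householder_mulVec_eq hv₂ ht h₂ hτ₂
  refine ⟨u₁, u₂, hu₁, hu₂, hu₁S.trans (Set.union_subset hv₁S htS),
    hu₂S.trans (Set.union_subset hv₂S htS), ?_⟩
  rw [hu₁v, ← hu₂v, mulVec_mulVec, householder_mul_self hu₂, one_mulVec]

lemma star_mulVec_dotProduct_mulVec {U : Matrix ι ι ℂ} (hU : U ∈ unitaryGroup ι ℂ)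
    (x y : ι → ℂ) :
    star (U *ᵥ x) ⬝ᵥ (U *ᵥ y) = star x ⬝ᵥ y := by
  rw [star_mulVec, ← dotProduct_mulVec, mulVec_mulVec, ← star_eq_conjTranspose,
    mem_unitaryGroup_iff'.mp hU, one_mulVec]

end Reflections

section ReflectionTraceNorm

variable {n : ℕ}

lemma trace_mAbs_proj_sub_proj {u v : Fin n → ℂ} (hu : star u ⬝ᵥ u = 1)
    (hv : star v ⬝ᵥ v = 1) :
    (mAbs (proj u - proj v)).trace = ((2 * √(1 - Complex.normSq (star u ⬝ᵥ v)) : ℝ) : ℂ) := by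
  set c := star u ⬝ᵥ v
  set σ := Complex.normSq c
  have hvu : star v ⬝ᵥ u = star c := by rw [star_dotProduct]
  have hσ : ((σ : ℝ) : ℂ) = c * star c := by rw [Complex.star_def, Complex.mul_conj]
  set X := proj u - proj v
  have hX : X.IsHermitian := (proj_isHermitian u).sub (proj_isHermitian v)
  have hXX : X * X =
      proj u + proj v - c • vecMulVec u (star v) - star c • vecMulVec v (star u) := by
    simp only [X, Matrix.sub_mul, Matrix.mul_sub, proj_mul_proj, hu, hv, hvu, one_smul]
    rw [← proj, ← proj]
    module
  set t := √(1 - σ)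
  have ht : t ^ 2 = 1 - σ := Real.sq_sqrt (by linarith [normSq_dotProduct_le_one hu hv])
  have ht0 : 0 ≤ t := Real.sqrt_nonneg _
  clear_value t
  have hX4 : X * X * (X * X) = ((t ^ 2 : ℝ) : ℂ) • (X * X) := by
    rw [ht, hXX]
    simp only [Matrix.sub_mul, Matrix.mul_sub, Matrix.add_mul, Matrix.mul_add,
      smul_mul_assoc, mul_smul_comm, proj, vecMulVec_mul_vecMulVec, vecMulVec_smul, hu, hv, hvu,
      smul_smul, one_smul]
    push_cast
    rw [hσ]
    simp only [show star u ⬝ᵥ v = c from rfl]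
    module
  have htr : (X * X).trace = ((2 * t ^ 2 : ℝ) : ℂ) := by
    rw [hXX, ht]
    simp only [trace_sub, trace_add, trace_smul, proj, trace_vecMulVec,
      dotProduct_comm _ (star _), hu, hv, hvu, smul_eq_mul]
    push_cast
    rw [hσ]
    ring
  rw [mAbs_eq_inv_smul_mul_self hX ht0 hX4, trace_smul, htr, smul_eq_mul,
    ← Complex.ofReal_mul]
  congr 1
  rcases eq_or_ne t 0 with h | h
  · simp [h]
  · field_simp

end ReflectionTraceNorm

section Pad

variable {k n : ℕ} (h : k ≤ n)

def padEquiv : Fin n ≃ Fin k ⊕ Fin (n - k) :=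
  (finCongr (Nat.add_sub_cancel' h).symm).trans finSumFinEquiv.symm

lemma padEquiv_of_lt {i : Fin n} (hi : (i : ℕ) < k) : padEquiv h i = Sum.inl ⟨i, hi⟩ := by
  have : finCongr (Nat.add_sub_cancel' h).symm i = Fin.castAdd (n - k) ⟨i, hi⟩ := by
    ext; simp
  simp only [padEquiv, Equiv.trans_apply, this, finSumFinEquiv_symm_apply_castAdd]

lemma padEquiv_of_le {i : Fin n} (hi : k ≤ (i : ℕ)) :
    padEquiv h i = Sum.inr ⟨(i : ℕ) - k, by omega⟩ := by
  have : finCongr (Nat.add_sub_cancel' h).symm i = Fin.natAdd k ⟨(i : ℕ) - k, by omega⟩ := by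
    ext; simp; omega
  simp only [padEquiv, Equiv.trans_apply, this, finSumFinEquiv_symm_apply_natAdd]

lemma le_padEquiv_symm_inr (b : Fin (n - k)) : k ≤ ((padEquiv h).symm (Sum.inr b) : ℕ) := by
  simp [padEquiv]

lemma pad_eq_submatrix_fromBlocks (u : Matrix (Fin k) (Fin k) ℂ) :
    pad h u = (fromBlocks u 0 0 (1 : Matrix (Fin (n - k)) (Fin (n - k)) ℂ)).submatrix
      (padEquiv h) (padEquiv h) := by
  ext i j
  rcases lt_or_ge (i : ℕ) k with hi | hi <;> rcases lt_or_ge (j : ℕ) k with hj | hj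
  · simp [pad, hi, hj, padEquiv_of_lt h hi, padEquiv_of_lt h hj]
  · simp [pad, hi, Nat.not_lt.2 hj, padEquiv_of_lt h hi, padEquiv_of_le h hj]
  · simp [pad, Nat.not_lt.2 hi, padEquiv_of_le h hi, padEquiv_of_lt h hj]
    omega
  · have hij : (i : ℕ) = j ↔ (i : ℕ) - k = j - k := by omega
    simp [pad, Nat.not_lt.2 hi, padEquiv_of_le h hi, padEquiv_of_le h hj, one_apply, Fin.ext_iff,
      hij]

lemma pad_mul (u v : Matrix (Fin k) (Fin k) ℂ) : pad h (u * v) = pad h u * pad h v := by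
  simp [pad_eq_submatrix_fromBlocks, submatrix_mul_equiv, fromBlocks_multiply]

lemma pad_one : pad h (1 : Matrix (Fin k) (Fin k) ℂ) = 1 := by
  simp [pad_eq_submatrix_fromBlocks, fromBlocks_one, submatrix_one_equiv]

lemma pad_conjTranspose (u : Matrix (Fin k) (Fin k) ℂ) : (pad h u)ᴴ = pad h uᴴ := by
  simp [pad_eq_submatrix_fromBlocks, conjTranspose_submatrix, fromBlocks_conjTranspose]

lemma pad_mem_unitaryGroup {u : Matrix (Fin k) (Fin k) ℂ} (hu : u ∈ unitaryGroup (Fin k) ℂ) :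
    pad h u ∈ unitaryGroup (Fin n) ℂ := by
  rw [mem_unitaryGroup_iff, star_eq_conjTranspose, pad_conjTranspose, ← pad_mul,
    ← star_eq_conjTranspose, mem_unitaryGroup_iff.mp hu, pad_one]

lemma pad_mulVec_single_of_le (u : Matrix (Fin k) (Fin k) ℂ) {j : Fin n} (hj : k ≤ (j : ℕ)) :
    pad h u *ᵥ Pi.single j 1 = Pi.single j 1 := by
  ext i
  rw [mulVec_single_one, col_apply, Pi.single_apply, pad]
  by_cases hi : (i : ℕ) < k
  · rw [dif_pos hi, dif_neg (by omega), if_neg (fun hij => by subst hij; omega)]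
  · simp [hi, Fin.ext_iff]

lemma support_pad_mulVec_single_subset (u : Matrix (Fin k) (Fin k) ℂ) {j : Fin n}
    (hj : (j : ℕ) < k) : Function.support (pad h u *ᵥ Pi.single j 1) ⊆ {i | (i : ℕ) < k} := by
  intro i hi
  by_contra hik
  have hik : k ≤ (i : ℕ) := not_lt.mp hik
  rw [Function.mem_support, mulVec_single_one, col_apply, pad, dif_neg (not_lt.mpr hik)] at hi
  exact hi (if_neg (by omega))

lemma exists_pad_eq {c : Matrix (Fin n) (Fin n) ℂ} (hc : c ∈ unitaryGroup (Fin n) ℂ)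
    (hfix : ∀ j : Fin n, k ≤ (j : ℕ) → c *ᵥ Pi.single j 1 = Pi.single j 1) :
    ∃ u ∈ unitaryGroup (Fin k) ℂ, pad h u = c := by
  set C := c.submatrix (padEquiv h).symm (padEquiv h).symm
  have hcol : ∀ i b, C i (Sum.inr b) =
      (1 : Matrix (Fin k ⊕ Fin (n - k)) (Fin k ⊕ Fin (n - k)) ℂ) i (Sum.inr b) := by
    intro i b
    have := congrFun (hfix _ (le_padEquiv_symm_inr h b)) ((padEquiv h).symm i)
    simp only [mulVec_single_one, col_apply, Pi.single_apply,
      (padEquiv h).symm.injective.eq_iff] at this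
    simp only [C, submatrix_apply, this, one_apply]
  have hB : C.toBlocks₁₂ = 0 := by ext a b; simpa [toBlocks₁₂] using hcol (Sum.inl a) b
  have hD : C.toBlocks₂₂ = 1 := by
    ext a b; simpa [toBlocks₂₂, one_apply] using hcol (Sum.inr a) b
  have hCu : Cᴴ * C = 1 := by
    rw [conjTranspose_submatrix, submatrix_mul_equiv, ← star_eq_conjTranspose,
      mem_unitaryGroup_iff'.mp hc, submatrix_one_equiv]
  have hC : C = fromBlocks C.toBlocks₁₁ 0 C.toBlocks₂₁ 1 := by
    rw [← hB, ← hD, fromBlocks_toBlocks]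
  rw [hC, fromBlocks_conjTranspose, fromBlocks_multiply, ← fromBlocks_one,
    fromBlocks_inj] at hCu
  simp only [conjTranspose_zero, conjTranspose_one, Matrix.mul_zero, Matrix.one_mul,
    Matrix.mul_one, zero_add] at hCu
  obtain ⟨h₁₁, -, h₂₁, -⟩ := hCu
  have h₂₁' : C.toBlocks₂₁ = 0 := by simpa using congrArg conjTranspose h₂₁
  refine ⟨C.toBlocks₁₁, ?_, ?_⟩
  · rw [mem_unitaryGroup_iff', star_eq_conjTranspose, ← h₁₁, h₂₁', Matrix.mul_zero, add_zero]
  · rw [pad_eq_submatrix_fromBlocks, ← h₂₁', ← hC, submatrix_submatrix]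
    simp

lemma pad_sub_pad_of_fin_one (h : 1 ≤ n) (u v : Matrix (Fin 1) (Fin 1) ℂ) :
    pad h u - pad h v = diagonal (Pi.single ⟨0, h⟩ (u 0 0 - v 0 0)) := by
  ext i j
  simp only [pad, Matrix.sub_apply, diagonal_apply, Pi.single_apply, Fin.ext_iff]
  split_ifs <;> first | omega | simp_all [Subsingleton.elim _ (0 : Fin 1)]

end Pad

section Diameter

variable {n : ℕ}

lemma trNorm_householder_sub_householder_le {u v : Fin n → ℂ} (hu : star u ⬝ᵥ u = 1)
    (hv : star v ⬝ᵥ v = 1) : trNorm (householder u - householder v) ≤ 4 / n := by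
  refine trNorm_le_div ?_
  rw [householder_sub_householder, mAbs_ofReal_smul zero_le_two, trace_smul,
    trace_mAbs_proj_sub_proj hv hu, smul_eq_mul, ← Complex.ofReal_mul, Complex.ofReal_re]
  have : √(1 - Complex.normSq (star v ⬝ᵥ u)) ≤ 1 :=
    Real.sqrt_le_one.mpr (by linarith [Complex.normSq_nonneg (star v ⬝ᵥ u)])
  linarith

lemma trNorm_pad_sub_pad_of_fin_one_le (h : 1 ≤ n) {u v : Matrix (Fin 1) (Fin 1) ℂ}
    (hu : u ∈ unitaryGroup (Fin 1) ℂ) (hv : v ∈ unitaryGroup (Fin 1) ℂ) :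
    trNorm (pad h u - pad h v) ≤ 2 / n := by
  refine trNorm_le_div ?_
  rw [pad_sub_pad_of_fin_one, mAbs_diagonal, trace_diagonal]
  simp only [Pi.single_apply, apply_ite, norm_zero, Complex.ofReal_zero, Finset.sum_ite_eq',
    Finset.mem_univ, if_true, Complex.ofReal_re]
  calc ‖u 0 0 - v 0 0‖ ≤ ‖u 0 0‖ + ‖v 0 0‖ := norm_sub_le _ _
    _ ≤ 1 + 1 :=
      add_le_add (entry_norm_bound_of_unitary hu 0 0) (entry_norm_bound_of_unitary hv 0 0)
    _ = 2 := one_add_one_eq_two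

lemma exists_trNorm_pad_sub_pad_mul_pad_le {k : ℕ} (hk : 2 ≤ k) (hkn : k ≤ n)
    {g₁ g₂ : Matrix (Fin k) (Fin k) ℂ} (hg₁ : g₁ ∈ unitaryGroup (Fin k) ℂ)
    (hg₂ : g₂ ∈ unitaryGroup (Fin k) ℂ) :
    ∃ h ∈ unitaryGroup (Fin (k - 1)) ℂ,
      trNorm (pad hkn g₁ - pad hkn g₂ * pad ((Nat.sub_le k 1).trans hkn) h) ≤ 4 / n := by
  set A := pad hkn g₁
  set B := pad hkn g₂
  have hA := pad_mem_unitaryGroup hkn hg₁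
  have hB := pad_mem_unitaryGroup hkn hg₂
  set m : Fin n := ⟨k - 1, by omega⟩
  set S : Set (Fin n) := {i | (i : ℕ) < k}
  have hS : S.Nontrivial :=
    ⟨⟨0, by omega⟩, show 0 < k by omega, ⟨1, by omega⟩, show 1 < k by omega, by simp⟩
  have hunit : ∀ U ∈ unitaryGroup (Fin n) ℂ,
      star (U *ᵥ Pi.single m 1) ⬝ᵥ (U *ᵥ Pi.single m 1) = 1 := fun U hU => by
    rw [star_mulVec_dotProduct_mulVec hU]; simp
  obtain ⟨u₁, u₂, hu₁, hu₂, hu₁S, hu₂S, hR⟩ :=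
    exists_householder_mulVec_householder_mulVec_eq hS (hunit A hA) (hunit B hB)
      (support_pad_mulVec_single_subset hkn g₁ (show (m : ℕ) < k by simp [m]; omega))
      (support_pad_mulVec_single_subset hkn g₂ (show (m : ℕ) < k by simp [m]; omega))
  set R := householder u₂ * householder u₁
  have hRA : B * (star B * (R * A)) = R * A := by
    rw [← Matrix.mul_assoc, mem_unitaryGroup_iff.mp hB, Matrix.one_mul]
  have hc : star B * (R * A) ∈ unitaryGroup (Fin n) ℂ :=
    mul_mem (Unitary.star_mem hB) (mul_mem (mul_mem (householder_mem_unitaryGroup hu₂)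
      (householder_mem_unitaryGroup hu₁)) hA)
  have hfix : ∀ j : Fin n, k - 1 ≤ (j : ℕ) →
      (star B * (R * A)) *ᵥ Pi.single j 1 = Pi.single j 1 := by
    intro j hj
    rcases (show (j : ℕ) = k - 1 ∨ k ≤ (j : ℕ) by omega) with hjm | hjk
    · obtain rfl : j = m := Fin.ext hjm
      rw [← mulVec_mulVec, ← mulVec_mulVec, ← mulVec_mulVec, hR, mulVec_mulVec,
        mem_unitaryGroup_iff'.mp hB, one_mulVec]
    · have hjS : j ∉ S := fun hj' => (show (j : ℕ) < k from hj').not_ge hjk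
      rw [← mulVec_mulVec, ← mulVec_mulVec, ← mulVec_mulVec, pad_mulVec_single_of_le hkn _ hjk,
        householder_mulVec_single_of_apply_eq_zero (Function.notMem_support.mp (hjS ∘ @hu₁S j)),
        householder_mulVec_single_of_apply_eq_zero (Function.notMem_support.mp (hjS ∘ @hu₂S j)),
        star_eq_conjTranspose, pad_conjTranspose, pad_mulVec_single_of_le hkn _ hjk]
  obtain ⟨h, hh, hpad⟩ := exists_pad_eq ((Nat.sub_le k 1).trans hkn) hc hfix
  refine ⟨h, hh, ?_⟩
  calc trNorm (A - B * pad _ h)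
      = trNorm (householder u₂ * (householder u₂ - householder u₁) * A) := by
        rw [hpad, hRA, Matrix.mul_sub, householder_mul_self hu₂, Matrix.sub_mul, Matrix.one_mul]
    _ = trNorm (householder u₂ - householder u₁) := by
        rw [trNorm_mul_unitary hA, trNorm_unitary_mul (householder_mem_unitaryGroup hu₂)]
    _ ≤ 4 / n := trNorm_householder_sub_householder_le hu₂ hu₁

lemma exists_trNorm_pad_mul_pad_sub_le {k : ℕ} (hk : 1 ≤ k) (hkn : k ≤ n)
    (g₁ g₂ : unitaryGroup (Fin k) ℂ) :
    ∃ h₁ h₂ : unitaryGroup (Fin (k - 1)) ℂ,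
      trNorm (pad hkn (g₁ : Matrix (Fin k) (Fin k) ℂ)
          * pad ((Nat.sub_le k 1).trans hkn) (h₁ : Matrix (Fin (k - 1)) (Fin (k - 1)) ℂ)
        - pad hkn (g₂ : Matrix (Fin k) (Fin k) ℂ)
          * pad ((Nat.sub_le k 1).trans hkn) (h₂ : Matrix (Fin (k - 1)) (Fin (k - 1)) ℂ))
        ≤ 4 / n := by
  rcases (show k = 1 ∨ 2 ≤ k by omega) with rfl | hk
  · refine ⟨1, 1, ?_⟩
    rw [UnitaryGroup.one_val, pad_one, Matrix.mul_one, Matrix.mul_one]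
    exact (trNorm_pad_sub_pad_of_fin_one_le hkn g₁.2 g₂.2).trans
      (div_le_div_of_nonneg_right (by norm_num) n.cast_nonneg)
  · obtain ⟨h, hh, hle⟩ := exists_trNorm_pad_sub_pad_mul_pad_le hk hkn g₁.2 g₂.2
    exact ⟨1, ⟨h, hh⟩, by rwa [UnitaryGroup.one_val, pad_one, Matrix.mul_one]⟩

end Diameter

/-- the diameter of `U(k)/U(k-1)` inside `U(n)` (normalized trace metric,
block-diagonal embeddings) is at most `4/n`. -/
theorem diam_quotient_le (n k : ℕ) (hk : 1 ≤ k) (hkn : k ≤ n) :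
    (⨆ g₁ : Matrix.unitaryGroup (Fin k) ℂ, ⨆ g₂ : Matrix.unitaryGroup (Fin k) ℂ,
      ⨅ h₁ : Matrix.unitaryGroup (Fin (k - 1)) ℂ, ⨅ h₂ : Matrix.unitaryGroup (Fin (k - 1)) ℂ,
        trNorm (pad hkn (g₁ : Matrix (Fin k) (Fin k) ℂ)
              * pad (le_trans (Nat.sub_le k 1) hkn) (h₁ : Matrix (Fin (k-1)) (Fin (k-1)) ℂ)
            - pad hkn (g₂ : Matrix (Fin k) (Fin k) ℂ)
              * pad (le_trans (Nat.sub_le k 1) hkn) (h₂ : Matrix (Fin (k-1)) (Fin (k-1)) ℂ)))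
      ≤ 4 / n := by
  refine ciSup_le fun g₁ => ciSup_le fun g₂ => ?_
  obtain ⟨h₁, h₂, hle⟩ := exists_trNorm_pad_mul_pad_sub_le hk hkn g₁ g₂
  exact ciInf_le_of_le ⟨0, Set.forall_mem_range.mpr fun _ => le_ciInf fun _ => trNorm_nonneg _⟩
    h₁ (ciInf_le_of_le ⟨0, Set.forall_mem_range.mpr fun _ => trNorm_nonneg _⟩ h₂ hle)
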